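/- arXiv:1310.7263 — 5 statements merged into one kernel-verified Lean document; each statement's English description precedes it below -/
import Mathlib

section
/- Let S be a finite set of rational prime numbers. If there exists a solution (x, y) ∈ O^× × O^× of the S-unit equation x + y = 1, then 2 ∈ S. -/
/-- `x ∈ ℤ[1/N_S]` (as a subset of `ℚ`), where `N_S = ∏_{p ∈ S} p`. -/
def memSRing (S : Finset ℕ) (x : ℚ) : Prop :=
  ∃ (n : ℤ) (k : ℕ), x = (n : ℚ) / (∏ p ∈ S, (p : ℚ)) ^ k

/-- `x` is a unit of the ring `ℤ[1/N_S] ⊆ ℚ`. -/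
def isSUnit (S : Finset ℕ) (x : ℚ) : Prop :=
  memSRing S x ∧ ∃ y : ℚ, memSRing S y ∧ x * y = 1

/-- If the `S`-unit equation `x + y = 1` has a solution, then `2 ∈ S`. -/
theorem sUnit_equation_two_mem (S : Finset ℕ) (hS : ∀ p ∈ S, p.Prime)
    (h : ∃ x y : ℚ, isSUnit S x ∧ isSUnit S y ∧ x + y = 1) :
    2 ∈ S := by
  by_contra h2
  obtain ⟨x, y, ⟨⟨n, a, hx⟩, xi, ⟨n', a', hxi⟩, hxinv⟩,
    ⟨⟨m, b, hy⟩, yi, ⟨m', b', hyi⟩, hyinv⟩, hsum⟩ := h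
  set N : ℕ := ∏ p ∈ S, p with hNdef
  have hNZ : (∏ p ∈ S, (p : ℚ)) = (N : ℚ) := by rw [hNdef, Nat.cast_prod]
  have hndvd : ¬ (2 ∣ N) := by
    intro hd
    obtain ⟨p, hp, hdp⟩ := (Nat.prime_two.prime.dvd_finset_prod_iff _).mp hd
    exact h2 (((Nat.prime_dvd_prime_iff_eq Nat.prime_two (hS p hp)).mp hdp) ▸ hp)
  have hNodd : Odd N := Nat.odd_iff.mpr (Nat.two_dvd_ne_zero.mp hndvd)
  have hNpos : 0 < N := Finset.prod_pos fun p hp => (hS p hp).pos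
  have hN0 : (N : ℚ) ≠ 0 := Nat.cast_ne_zero.mpr hNpos.ne'
  rw [hNZ] at hx hxi hy hyi
  -- integer equation from x * xi = 1
  have hx1 : n * n' = (N : ℤ) ^ (a + a') := by
    have : (n : ℚ) * n' = (N : ℚ) ^ (a + a') := by
      rw [hx, hxi] at hxinv
      field_simp at hxinv
      rw [pow_add]; linarith [hxinv]
    exact_mod_cast this
  have hy1 : m * m' = (N : ℤ) ^ (b + b') := by
    have : (m : ℚ) * m' = (N : ℚ) ^ (b + b') := by
      rw [hy, hyi] at hyinv
      field_simp at hyinv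
      rw [pow_add]; linarith [hyinv]
    exact_mod_cast this
  have hNZodd : Odd ((N : ℤ)) := by exact_mod_cast hNodd
  have hnodd : Odd n := by
    have := hx1 ▸ (Int.odd_pow.mpr (Or.inl hNZodd) : Odd ((N:ℤ) ^ (a + a')))
    exact (Int.odd_mul.mp this).1
  have hmodd : Odd m := by
    have := hy1 ▸ (Int.odd_pow.mpr (Or.inl hNZodd) : Odd ((N:ℤ) ^ (b + b')))
    exact (Int.odd_mul.mp this).1
  have hs : n * (N : ℤ) ^ b + m * (N : ℤ) ^ a = (N : ℤ) ^ (a + b) := by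
    have : (n : ℚ) * (N : ℚ) ^ b + (m : ℚ) * (N : ℚ) ^ a = (N : ℚ) ^ (a + b) := by
      rw [hx, hy] at hsum
      field_simp at hsum
      rw [pow_add]; linarith [hsum]
    exact_mod_cast this
  have heven : Even (n * (N : ℤ) ^ b + m * (N : ℤ) ^ a) :=
    (hnodd.mul (Int.odd_pow.mpr (Or.inl hNZodd))).add_odd
      (hmodd.mul (Int.odd_pow.mpr (Or.inl hNZodd)))
  rw [hs] at heven
  exact (Int.not_odd_iff_even.mpr heven) (Int.odd_pow.mpr (Or.inl hNZodd))
end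

section
/- Let S be a finite set of rational prime numbers with |S| ≤ 1. Then every solution (x, y) ∈ O^× × O^× of the S-unit equation x + y = 1 belongs to the set {(1/2, 1/2), (2, −1), (−1, 2)}. -/
/-!
Since `S ⊆ {p}` for some prime `p`, every `S`-unit is `±p^m` with `m ∈ ℤ`: the numerators of
`x` and `x⁻¹` multiply to a power of `p`. Moving a negative term across, `x + y = 1` becomes
`p^m + p^n = p^l`. Dividing by the smallest power gives `1 + p^d = p^e` in `ℕ`; reducing mod `p`
forces `d = 0`, so `p^e = 2`, i.e. `p = 2` and `e = 1`. The three sign patterns give the three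
solutions.
-/

lemma memSRing_mono {S T : Finset ℕ} (hST : S ⊆ T) (hT : 0 ∉ T) {x : ℚ}
    (hx : memSRing S x) : memSRing T x := by
  classical
  obtain ⟨n, k, rfl⟩ := hx
  have hne : ∏ p ∈ T \ S, (p : ℚ) ≠ 0 :=
    Finset.prod_ne_zero_iff.2 fun p hp =>
      Nat.cast_ne_zero.2 fun h => hT (h ▸ (Finset.mem_sdiff.1 hp).1)
  refine ⟨n * (∏ p ∈ T \ S, (p : ℕ)) ^ k, k, ?_⟩
  rw [← Finset.prod_sdiff hST, mul_pow]
  push_cast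
  rw [mul_comm (n : ℚ), mul_div_mul_left _ _ (pow_ne_zero k hne)]

lemma isSUnit_mono {S T : Finset ℕ} (hST : S ⊆ T) (hT : 0 ∉ T) {x : ℚ}
    (hx : isSUnit S x) : isSUnit T x :=
  ⟨memSRing_mono hST hT hx.1, hx.2.imp fun _ h => ⟨memSRing_mono hST hT h.1, h.2⟩⟩

lemma isSUnit_singleton {p : ℕ} (hp : p.Prime) {x : ℚ} (hx : isSUnit {p} x) :
    ∃ m : ℤ, x = (p : ℚ) ^ m ∨ x = -(p : ℚ) ^ m := by
  obtain ⟨⟨n, k, hn⟩, x', ⟨n', k', hn'⟩, hxx'⟩ := hx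
  rw [Finset.prod_singleton] at hn hn'
  have hp0 : (p : ℚ) ≠ 0 := by exact_mod_cast hp.ne_zero
  have hnn' : n * n' = (p : ℤ) ^ (k + k') := by
    rw [hn, hn', div_mul_div_comm, div_eq_one_iff_eq (by positivity), ← pow_add] at hxx'
    exact_mod_cast hxx'
  obtain ⟨a, -, ha⟩ : ∃ a ≤ k + k', n.natAbs = p ^ a := by
    rw [← Nat.dvd_prime_pow hp]
    simpa [Int.natAbs_pow] using Int.natAbs_dvd_natAbs.2 ⟨n', hnn'.symm⟩
  refine ⟨a - k, ?_⟩
  rw [hn, zpow_sub₀ hp0, zpow_natCast, zpow_natCast]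
  rcases Int.natAbs_eq n with h | h
  · left; rw [h, ha]; push_cast; rfl
  · right; rw [h, ha]; push_cast; ring

lemma Nat.Prime.eq_two_of_one_add_pow_eq_pow {p d e : ℕ} (hp : p.Prime) (h : 1 + p ^ d = p ^ e) :
    p = 2 ∧ d = 0 ∧ e = 1 := by
  have he : e ≠ 0 := by
    rintro rfl
    rw [pow_zero] at h
    exact (pow_pos hp.pos d).ne' (by omega)
  obtain rfl : d = 0 := by
    by_contra hd
    have : p ∣ 1 := (Nat.dvd_add_left (dvd_pow_self p hd)).1 (h ▸ dvd_pow_self p he)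
    exact hp.one_lt.ne' (Nat.dvd_one.1 this)
  obtain ⟨hp2, he1⟩ := Nat.prime_two.pow_eq_iff.1 (h.symm.trans (by norm_num))
  exact ⟨hp2, rfl, he1⟩

lemma zpow_add_zpow_eq_zpow {p : ℕ} (hp : p.Prime) {m n l : ℤ}
    (h : (p : ℚ) ^ m + (p : ℚ) ^ n = (p : ℚ) ^ l) : p = 2 ∧ m = n ∧ l = m + 1 := by
  wlog hmn : m ≤ n generalizing m n
  · obtain ⟨hp2, hnm, hl⟩ := this (by rwa [add_comm]) (le_of_not_ge hmn)
    exact ⟨hp2, hnm.symm, by omega⟩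
  have hp0 : (p : ℚ) ≠ 0 := by exact_mod_cast hp.ne_zero
  obtain ⟨d, hd⟩ : ∃ d : ℕ, n = m + d := ⟨(n - m).toNat, by omega⟩
  have hdiv : 1 + (p : ℚ) ^ (d : ℤ) = (p : ℚ) ^ (l - m) := by
    rw [zpow_sub₀ hp0, eq_div_iff (zpow_ne_zero _ hp0), ← h, hd, zpow_add₀ hp0]
    ring
  obtain ⟨e, he⟩ : ∃ e : ℕ, l - m = e := by
    have hpos : 0 < l - m := by
      rw [← one_lt_zpow_iff_right₀ (a := (p : ℚ)) (by exact_mod_cast hp.one_lt), ← hdiv]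
      linarith [zpow_pos (show (0 : ℚ) < p by exact_mod_cast hp.pos) (d : ℤ)]
    exact ⟨(l - m).toNat, by omega⟩
  rw [he, zpow_natCast, zpow_natCast] at hdiv
  obtain ⟨hp2, rfl, rfl⟩ := hp.eq_two_of_one_add_pow_eq_pow (by exact_mod_cast hdiv)
  exact ⟨hp2, by omega, by omega⟩

lemma eq_of_add_eq_one_of_eq_pm_zpow {p : ℕ} (hp : p.Prime) {x y : ℚ} {m n : ℤ}
    (hx : x = (p : ℚ) ^ m ∨ x = -(p : ℚ) ^ m) (hy : y = (p : ℚ) ^ n ∨ y = -(p : ℚ) ^ n)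
    (hxy : x + y = 1) :
    (x = 1/2 ∧ y = 1/2) ∨ (x = 2 ∧ y = -1) ∨ (x = -1 ∧ y = 2) := by
  rcases hx with rfl | rfl <;> rcases hy with rfl | rfl
  · obtain ⟨rfl, rfl, hm⟩ := zpow_add_zpow_eq_zpow hp (hxy.trans (zpow_zero _).symm)
    obtain rfl : m = -1 := by omega
    left; norm_num
  · obtain ⟨rfl, rfl, rfl⟩ := zpow_add_zpow_eq_zpow hp (m := n) (n := 0) (l := m)
      (by rw [zpow_zero]; linarith)
    right; left; norm_num
  · obtain ⟨rfl, rfl, rfl⟩ := zpow_add_zpow_eq_zpow hp (m := m) (n := 0) (l := n)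
      (by rw [zpow_zero]; linarith)
    right; right; norm_num
  · have hp0 : (0 : ℚ) < p := by exact_mod_cast hp.pos
    linarith [zpow_pos hp0 m, zpow_pos hp0 n]

/-- If `|S| ≤ 1`, then every solution of the `S`-unit equation `x + y = 1` is one of
`(1/2, 1/2)`, `(2, −1)`, `(−1, 2)`. -/
theorem sUnit_equation_small_S (S : Finset ℕ) (hS : ∀ p ∈ S, p.Prime)
    (hcard : S.card ≤ 1) (x y : ℚ) (hx : isSUnit S x) (hy : isSUnit S y)
    (hxy : x + y = 1) :
    (x = 1/2 ∧ y = 1/2) ∨ (x = 2 ∧ y = -1) ∨ (x = -1 ∧ y = 2) := by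
  obtain ⟨p, hp, hSp⟩ : ∃ p, p.Prime ∧ S ⊆ {p} := by
    rcases S.eq_empty_or_nonempty with rfl | ⟨q, hq⟩
    · exact ⟨2, Nat.prime_two, Finset.empty_subset _⟩
    · exact ⟨q, hS q hq, fun r hr =>
        Finset.mem_singleton.2 (Finset.card_le_one.1 hcard r hr q hq)⟩
  have hp0 : 0 ∉ ({p} : Finset ℕ) := by simpa using hp.ne_zero.symm
  obtain ⟨m, hm⟩ := isSUnit_singleton hp (isSUnit_mono hSp hp0 hx)
  obtain ⟨n, hn⟩ := isSUnit_singleton hp (isSUnit_mono hSp hp0 hy)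
  exact eq_of_add_eq_one_of_eq_pm_zpow hp hm hn hxy
end

section
/- Let λ ∈ ℚ with λ ≠ 0 and λ ≠ 1, and set j = 2^8 · (λ^2 − λ + 1)^3 / (λ^2 − λ)^2. Then h(λ) ≤ (1/2) · h(j) + 5 · log 2. -/
/-- The absolute logarithmic Weil height of a rational number `β = p/q` in lowest terms:
`h(β) = log max (|p|, q)`. -/
noncomputable def ratHeight (β : ℚ) : ℝ :=
  Real.log (max |(β.num : ℝ)| (β.den : ℝ))

/-!
Write `λ = p/q` in lowest terms, `N = p² − pq + q²` and `D = pq(p − q)`, so that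
`j = 2⁸ N³ / D²`. Since `N` is coprime to each of `p`, `q`, `p − q`, it is coprime to `D`,
so `N³` survives in the reduced numerator of `j` and `h(j) ≥ 3 log N`. On the other hand
`2N = p² + q² + (p − q)² ≥ max(|p|, q)²`, so `2 h(λ) ≤ log 2 + log N`. Together,
`h(λ) ≤ h(j)/6 + (log 2)/2`, which is stronger than the claim.
-/

open Real

def legendreJ {K : Type*} [Field K] (lam : K) : K :=
  2 ^ 8 * (lam ^ 2 - lam + 1) ^ 3 / (lam ^ 2 - lam) ^ 2

theorem legendreJ_div {K : Type*} [Field K] (p q : K) (hq : q ≠ 0) :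
    legendreJ (p / q) = 2 ^ 8 * (p ^ 2 - p * q + q ^ 2) ^ 3 / (p * q * (p - q)) ^ 2 := by
  have hN : (p / q) ^ 2 - p / q + 1 = (p ^ 2 - p * q + q ^ 2) / q ^ 2 := by
    field_simp
  have hD : (p / q) ^ 2 - p / q = p * q * (p - q) / q ^ 3 := by
    field_simp
  rw [legendreJ, hN, hD, div_pow, div_pow, ← pow_mul, ← pow_mul, mul_div_assoc, mul_div_assoc,
    div_div_div_cancel_right₀ (pow_ne_zero _ hq)]

theorem IsCoprime.sq_sub_mul_add_sq {R : Type*} [CommRing R] {p q : R} (h : IsCoprime p q) :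
    IsCoprime (p ^ 2 - p * q + q ^ 2) (p * q * (p - q)) := by
  have hp : IsCoprime (p ^ 2 - p * q + q ^ 2) p := by
    have := h.symm.pow_left (m := 2) |>.add_mul_left_left (p - q)
    rwa [show q ^ 2 + p * (p - q) = p ^ 2 - p * q + q ^ 2 by ring] at this
  have hq : IsCoprime (p ^ 2 - p * q + q ^ 2) q := by
    have := h.pow_left (m := 2) |>.add_mul_left_left (q - p)
    rwa [show p ^ 2 + q * (q - p) = p ^ 2 - p * q + q ^ 2 by ring] at this
  have hpq : IsCoprime (p * q) (p - q) := by
    refine IsCoprime.mul_left ?_ ?_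
    · simpa [neg_add_eq_sub] using h.neg_right.add_mul_left_right 1
    · simpa [← sub_eq_add_neg] using h.symm.add_mul_left_right (-1)
  have hsub : IsCoprime (p ^ 2 - p * q + q ^ 2) (p - q) := by
    have := hpq.add_mul_left_left (p - q)
    rwa [show p * q + (p - q) * (p - q) = p ^ 2 - p * q + q ^ 2 by ring] at this
  exact (hp.mul_right hq).mul_right hsub

theorem max_abs_sq_le_two_mul {R : Type*} [CommRing R] [LinearOrder R] [IsStrictOrderedRing R] (p q : R) :
    max |p| |q| ^ 2 ≤ 2 * (p ^ 2 - p * q + q ^ 2) := by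
  rcases max_choice |p| |q| with h | h <;> rw [h, sq_abs] <;> nlinarith [sq_nonneg (p - q), sq_nonneg p, sq_nonneg q]

theorem ratHeight_nonneg (β : ℚ) : 0 ≤ ratHeight β :=
  log_nonneg <| le_max_of_le_right <| by exact_mod_cast β.den_pos

theorem Rat.dvd_num_intCast_div {a b c : ℤ} (hca : c ∣ a) (hcb : IsCoprime c b) :
    c ∣ (a / b : ℚ).num := by
  rcases eq_or_ne b 0 with rfl | hb
  · simp
  have hcross : a * (a / b : ℚ).den = (a / b : ℚ).num * b := by
    have := Rat.mul_den_eq_num (a / b : ℚ)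
    rw [div_mul_eq_mul_div, div_eq_iff (by exact_mod_cast hb)] at this
    exact_mod_cast this
  exact hcb.dvd_of_dvd_mul_right (hcross ▸ hca.mul_right _)

theorem log_abs_le_ratHeight_intCast_div {a b c : ℤ} (ha : a ≠ 0) (hca : c ∣ a)
    (hcb : IsCoprime c b) : log |(c : ℝ)| ≤ ratHeight (a / b) := by
  rcases eq_or_ne b 0 with rfl | hb
  · rw [isCoprime_zero_right, Int.isUnit_iff_abs_eq] at hcb
    rw [← Int.cast_abs, hcb, Int.cast_one, log_one]
    exact ratHeight_nonneg _
  have hc : c ≠ 0 := ne_zero_of_dvd_ne_zero ha hca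
  have hnum : (a / b : ℚ).num ≠ 0 := Rat.num_ne_zero.mpr (by simp [ha, hb])
  have hle : |c| ≤ |(a / b : ℚ).num| :=
    Int.le_of_dvd (abs_pos.mpr hnum) ((abs_dvd_abs _ _).mpr (Rat.dvd_num_intCast_div hca hcb))
  calc log |(c : ℝ)| ≤ log |((a / b : ℚ).num : ℝ)| :=
        log_le_log (by positivity) (by exact_mod_cast hle)
    _ ≤ ratHeight (a / b) := log_le_log (by positivity) (le_max_left _ _)

theorem two_mul_ratHeight_le (β : ℚ) :
    2 * ratHeight β ≤
      log (2 * ((β.num ^ 2 - β.num * β.den + (β.den : ℤ) ^ 2 : ℤ) : ℝ)) := by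
  have hden : (0 : ℝ) < β.den := by exact_mod_cast β.den_pos
  calc 2 * ratHeight β = log (max |(β.num : ℝ)| β.den ^ 2) := by
        rw [ratHeight, log_pow, Nat.cast_ofNat]
    _ ≤ _ := log_le_log (by positivity) <| by
        push_cast
        simpa [abs_of_pos hden] using max_abs_sq_le_two_mul (β.num : ℝ) β.den

theorem six_mul_ratHeight_le_ratHeight_legendreJ (lam : ℚ) :
    6 * ratHeight lam ≤ ratHeight (legendreJ lam) + 3 * log 2 := by
  set p := lam.num
  set q : ℤ := (lam.den : ℤ)
  set N : ℤ := p ^ 2 - p * q + q ^ 2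
  have hq : 0 < q := Int.natCast_pos.mpr lam.den_pos
  have hN : 0 < N := by nlinarith [sq_nonneg (2 * p - q)]
  have hj : legendreJ lam = ((2 ^ 8 * N ^ 3 : ℤ) : ℚ) / ((p * q * (p - q)) ^ 2 : ℤ) := by
    conv_lhs => rw [← Rat.num_div_den lam]
    rw [legendreJ_div _ _ (by positivity)]
    push_cast [N, p, q]
    rfl
  have hlow : log |((N ^ 3 : ℤ) : ℝ)| ≤ ratHeight (legendreJ lam) :=
    hj ▸ log_abs_le_ratHeight_intCast_div (by positivity) (dvd_mul_left _ _)
      lam.isCoprime_num_den.sq_sub_mul_add_sq.pow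
  have hup : 2 * ratHeight lam ≤ log 2 + log N := by
    rw [← log_mul two_ne_zero (by exact_mod_cast hN.ne')]
    exact two_mul_ratHeight_le lam
  rw [Int.cast_pow, abs_pow, log_pow, abs_of_pos (by exact_mod_cast hN), Nat.cast_ofNat] at hlow
  linarith

theorem legendre_lambda_height_le_general (lam : ℚ) :
    ratHeight lam ≤
      1 / 2 * ratHeight (2 ^ 8 * (lam ^ 2 - lam + 1) ^ 3 / (lam ^ 2 - lam) ^ 2) +
      5 * Real.log 2 := by
  have hsharp := six_mul_ratHeight_le_ratHeight_legendreJ lam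
  have hj := ratHeight_nonneg (legendreJ lam)
  have hlog2 : 0 < log 2 := log_pos one_lt_two
  unfold legendreJ at hsharp hj
  linarith

/-- For `λ ∈ ℚ`, `λ ≠ 0, 1`, the `j`-invariant
`j = 2⁸ (λ² − λ + 1)³ / (λ² − λ)²` of the Legendre curve satisfies
`h(λ) ≤ (1/2) h(j) + 5 log 2`. -/
theorem legendre_lambda_height_le (lam : ℚ) (h0 : lam ≠ 0) (h1 : lam ≠ 1) :
    ratHeight lam ≤
      1 / 2 * ratHeight (2 ^ 8 * (lam ^ 2 - lam + 1) ^ 3 / (lam ^ 2 - lam) ^ 2) +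
      5 * Real.log 2 :=
  legendre_lambda_height_le_general lam
end

section
/- Let τ ∈ ℂ with Im(τ) ≥ √3/2, set q = exp(2πiτ) and Δ(τ) = q · ∏_{n=1}^∞ (1 − q^n)^{24}. Then |(2π)^{12} · Δ(τ) · Im(τ)^6| ≤ e^{16}, i.e. log|(2π)^{12} Δ(τ) Im(τ)^6| ≤ 16. -/
/-!
Write `y = Im τ` and `q = e^{2πiτ}`, so `‖q‖ = e^{-2πy}`. The factor `y⁶ e^{-2πy}` is at most
`(3/(πe))⁶`, its value at the maximum `y = 3/π`. Since `‖1 - qⁿ‖ ≤ 1 + ‖q‖ⁿ ≤ e^{‖q‖ⁿ}`, the product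
is at most `exp (24 ‖q‖/(1 - ‖q‖))`, and `Im τ ≥ √3/2` gives `‖q‖ ≤ e^{-π√3} < 1/200`. What is left
is the numerical inequality `(12π)⁶ e^{-6} e^{24/199} < e^{16}`.
-/

open Real

theorem norm_tprod_one_add_le_exp_tsum {ι R : Type*} [NormedCommRing R] [NormOneClass R]
    {f : ι → R} (hf : Summable fun i ↦ ‖f i‖) :
    ‖∏' i, (1 + f i)‖ ≤ exp (∑' i, ‖f i‖) := by
  by_cases hprod : Multipliable fun i ↦ 1 + f i
  · refine le_of_tendsto' (Filter.Tendsto.norm hprod.hasProd) fun s ↦ ?_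
    calc ‖∏ i ∈ s, (1 + f i)‖ ≤ ‖∏ i ∈ s, (1 + f i) - 1‖ + ‖(1 : R)‖ :=
          norm_le_norm_sub_add _ _
      _ ≤ exp (∑ i ∈ s, ‖f i‖) := by grw [s.norm_prod_one_add_sub_one_le]; simp
      _ ≤ exp (∑' i, ‖f i‖) := exp_le_exp.mpr (hf.sum_le_tsum s fun i _ ↦ norm_nonneg _)
  · rw [tprod_eq_one_of_not_multipliable hprod, norm_one]
    exact one_le_exp (tsum_nonneg fun i ↦ norm_nonneg _)

theorem norm_tprod_one_sub_pow_le {q : ℂ} (hq : ‖q‖ < 1) :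
    ‖∏' n : ℕ, (1 - q ^ (n + 1))‖ ≤ exp (‖q‖ / (1 - ‖q‖)) := by
  have hgeom : HasSum (fun n : ℕ ↦ ‖q‖ ^ (n + 1)) (‖q‖ / (1 - ‖q‖)) := by
    simpa only [pow_succ', div_eq_mul_inv] using
      (hasSum_geometric_of_lt_one (norm_nonneg q) hq).mul_left ‖q‖
  simpa [sub_eq_add_neg, hgeom.tsum_eq] using
    norm_tprod_one_add_le_exp_tsum (f := fun n : ℕ ↦ -q ^ (n + 1))
      (by simpa using hgeom.summable)

theorem norm_tprod_one_sub_pow_pow_le {q : ℂ} (hq : ‖q‖ < 1) (k : ℕ) :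
    ‖∏' n : ℕ, (1 - q ^ (n + 1)) ^ k‖ ≤ exp (k * (‖q‖ / (1 - ‖q‖))) := by
  rw [(ModularForm.multipliable_one_sub_pow hq).tprod_pow, norm_pow, exp_nat_mul]
  exact pow_le_pow_left₀ (norm_nonneg _) (norm_tprod_one_sub_pow_le hq) k

theorem pow_mul_exp_neg_mul_le {c y : ℝ} (n : ℕ) (hc : 0 < c) (hy : 0 ≤ y) :
    y ^ n * exp (-(c * y)) ≤ (n / (c * exp 1)) ^ n := by
  rcases n.eq_zero_or_pos with rfl | hn
  · simpa using mul_nonneg hc.le hy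
  obtain ⟨x, hnx⟩ : ∃ x : ℝ, n * x = c * y := ⟨c * y / n, by field_simp⟩
  have hx : 0 ≤ x := (mul_nonneg_iff_of_pos_left (by positivity)).mp (hnx ▸ mul_nonneg hc.le hy)
  have hsplit : y ^ n * exp (-(c * y)) = (n / c * (x * exp (-x))) ^ n := by
    rw [mul_pow, mul_pow, ← exp_nat_mul, mul_neg, hnx, ← mul_assoc, ← mul_pow]
    congr 2
    field_simp
    linarith
  have hxy : n / c * (x * exp (-x)) ≤ n / (c * exp 1) := by
    grw [mul_exp_neg_le_exp_neg_one, exp_neg]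
    exact le_of_eq (by field_simp)
  rw [hsplit]
  exact pow_le_pow_left₀ (by positivity) hxy n

theorem exp_neg_pi_mul_sqrt_three_le : exp (-(π * √3)) ≤ 1 / 200 := by
  have hsqrt : (1.72 : ℝ) ≤ √3 := Real.le_sqrt_of_sq_le (by norm_num)
  have hexp : (200 : ℝ) ≤ exp 5.4 := calc
    (200 : ℝ) ≤ 2.7182818283 ^ 5 * (0.4 + 1) := by norm_num
    _ ≤ exp 1 ^ 5 * exp 0.4 := by gcongr; exacts [exp_one_gt_d9.le, add_one_le_exp _]
    _ = exp 5.4 := by rw [← exp_nat_mul, ← exp_add]; norm_num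
  calc exp (-(π * √3)) ≤ exp (-5.4) := exp_le_exp.mpr (by nlinarith [pi_gt_d2])
    _ ≤ 1 / 200 := by rw [exp_neg, one_div]; exact inv_anti₀ (by norm_num) hexp

theorem two_pi_pow_twelve_mul_exp_le_exp_sixteen {r : ℝ} (hr0 : 0 ≤ r) (hr : r ≤ 1 / 200) :
    (2 * π) ^ 12 * (6 / (2 * π * exp 1)) ^ 6 * exp (24 * (r / (1 - r))) ≤ exp 16 := by
  have hr1 : 0 < 1 - r := by linarith
  set x := 24 * (r / (1 - r))
  have hx : x ≤ 24 / 199 := by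
    have : r / (1 - r) ≤ 1 / 199 := by rw [div_le_iff₀ (by linarith)]; linarith
    linarith
  have hexp_x : exp x ≤ 199 / 175 := calc
    exp x ≤ 1 / (1 - x) := exp_bound_div_one_sub_of_interval (by positivity) (by linarith)
    _ ≤ 199 / 175 := by rw [div_le_div_iff₀ (by linarith) (by norm_num)]; linarith
  have hsplit : (2 * π) ^ 12 * (6 / (2 * π * exp 1)) ^ 6 * exp x
      = (12 * π) ^ 6 * exp x / exp 1 ^ 6 := by
    field_simp; ring
  rw [hsplit, div_le_iff₀ (by positivity), ← exp_nat_mul, ← exp_add]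
  calc (12 * π) ^ 6 * exp x ≤ (12 * 3.1416) ^ 6 * (199 / 175) := by
        gcongr; exact pi_lt_d4.le
    _ ≤ 2.7182818283 ^ 22 := by norm_num
    _ ≤ exp 1 ^ 22 := by gcongr; exact exp_one_gt_d9.le
    _ = exp (16 + (6 : ℕ) * 1) := by rw [← exp_nat_mul]; norm_num

open Complex in
/-- For `τ ∈ ℂ` with `Im τ ≥ √3/2`, setting `q = exp(2πiτ)` and
`Δ(τ) = q ∏_{n ≥ 1} (1 − qⁿ)²⁴`, one has `log |(2π)¹² Δ(τ) (Im τ)⁶| ≤ 16`. -/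
theorem discriminant_form_log_bound (τ : ℂ) (h : Real.sqrt 3 / 2 ≤ τ.im) :
    Real.log ‖
      (((2 * Real.pi : ℝ) : ℂ) ^ 12 *
        (Complex.exp (2 * Real.pi * Complex.I * τ) *
          ∏' n : ℕ, (1 - Complex.exp (2 * Real.pi * Complex.I * τ) ^ (n + 1)) ^ 24) *
        ((τ.im : ℂ) ^ 6))‖ ≤ 16 := by
  set q := Complex.exp (2 * π * Complex.I * τ)
  have him : 0 < τ.im := lt_of_lt_of_le (by positivity) h
  have hq : ‖q‖ = Real.exp (-(2 * π * τ.im)) := by simp [q, Complex.norm_exp]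
  have hq_small : ‖q‖ ≤ 1 / 200 :=
    hq ▸ (exp_le_exp.mpr (by nlinarith [pi_pos])).trans exp_neg_pi_mul_sqrt_three_le
  have hdecay : τ.im ^ 6 * ‖q‖ ≤ (6 / (2 * π * Real.exp 1)) ^ 6 := by
    simpa [hq] using pow_mul_exp_neg_mul_le 6 two_pi_pos him.le
  have hprod := norm_tprod_one_sub_pow_pow_le (hq_small.trans_lt (by norm_num)) 24
  set Δ := q * ∏' n : ℕ, (1 - q ^ (n + 1)) ^ 24
  rcases (norm_nonneg (((2 * π : ℝ) : ℂ) ^ 12 * Δ * (τ.im : ℂ) ^ 6)).eq_or_lt with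
    hzero | hpos
  · rw [← hzero, Real.log_zero]; norm_num
  rw [Real.log_le_iff_le_exp hpos]
  calc ‖((2 * π : ℝ) : ℂ) ^ 12 * Δ * (τ.im : ℂ) ^ 6‖
        = (2 * π) ^ 12 * (τ.im ^ 6 * ‖q‖) * ‖∏' n : ℕ, (1 - q ^ (n + 1)) ^ 24‖ := by
        simp only [Δ, norm_mul, norm_pow, Complex.norm_real, norm_of_nonneg two_pi_pos.le,
          norm_of_nonneg him.le]
        ring
    _ ≤ (2 * π) ^ 12 * (6 / (2 * π * Real.exp 1)) ^ 6 * Real.exp (24 * (‖q‖ / (1 - ‖q‖))) := by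
        gcongr; exact_mod_cast hprod
    _ ≤ Real.exp 16 := two_pi_pow_twelve_mul_exp_le_exp_sixteen (norm_nonneg q) hq_small
end

section
/- For every integer n ≥ 1, one has ∏_{p | n} (1 + 1/p) ≤ 1 + (log n) / (2 log 2), where the product is taken over all rational primes p dividing n. -/
/-!
Add the primes of `n` one at a time in increasing order, writing `c = 2 log 2`. If the primes
below `p` already give `∏ (1 + 1/q) ≤ 1 + T / c` with `T = ∑ log q`, then multiplying by
`1 + 1/p` keeps the bound `1 + (T + log p) / c` as soon as `c + T ≤ p log p`. Since `T` is at
most the logarithm of the primorial of `p - 1`, this is `4 · (p - 1)# ≤ p ^ p`, which follows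
from `(p - 1)# ≤ 4 ^ (p - 1)` for `p ≥ 4` and is checked by hand for `p = 2, 3`.
-/

open Finset Real

lemma prod_le_primorial {s : Finset ℕ} {n : ℕ} (hs : ∀ q ∈ s, q.Prime ∧ q ≤ n) :
    ∏ q ∈ s, q ≤ primorial n := by
  refine Nat.le_of_dvd (primorial_pos n) (prod_dvd_prod_of_subset _ _ _ fun q hq ↦ ?_)
  simpa [Nat.lt_succ_iff, and_comm] using hs q hq

lemma four_mul_primorial_pred_le_pow_self {p : ℕ} (hp : 2 ≤ p) :
    4 * primorial (p - 1) ≤ p ^ p := by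
  rcases lt_or_ge p 4 with hp4 | hp4
  · interval_cases p <;> decide
  · calc 4 * primorial (p - 1) ≤ 4 * 4 ^ (p - 1) := by gcongr; exact primorial_le_four_pow _
      _ = 4 ^ p := by rw [← pow_succ', Nat.sub_add_cancel (by omega)]
      _ ≤ p ^ p := by gcongr

lemma two_mul_log_two_add_sum_log_le {p : ℕ} (hp : 2 ≤ p) {s : Finset ℕ}
    (hs : ∀ q ∈ s, q.Prime ∧ q < p) :
    2 * log 2 + ∑ q ∈ s, log q ≤ p * log p := by
  have hs_pos : ∀ q ∈ s, (0 : ℝ) < q := fun q hq ↦ by exact_mod_cast (hs q hq).1.pos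
  have hprimorial : ∏ q ∈ s, q ≤ primorial (p - 1) :=
    prod_le_primorial fun q hq ↦ ⟨(hs q hq).1, Nat.le_pred_of_lt (hs q hq).2⟩
  have hprod : 4 * ∏ q ∈ s, q ≤ p ^ p :=
    (Nat.mul_le_mul_left 4 hprimorial).trans (four_mul_primorial_pred_le_pow_self hp)
  calc 2 * log 2 + ∑ q ∈ s, log q = log (4 * ∏ q ∈ s, (q : ℝ)) := by
        rw [log_mul (by norm_num) (prod_pos hs_pos).ne', log_prod fun q hq ↦ (hs_pos q hq).ne',
          show (4 : ℝ) = 2 ^ 2 by norm_num, log_pow]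
        push_cast; ring
    _ ≤ log ((p : ℝ) ^ p) := by
        gcongr
        · exact mul_pos (by norm_num) (prod_pos hs_pos)
        · simpa using (Nat.cast_le (α := ℝ)).mpr hprod
    _ = p * log p := log_pow _ _

lemma one_add_inv_mul_le {x y T c a : ℝ} (hx : 0 < x) (hc : 0 < c) (ha : a ≤ 1 + T / c)
    (h : c + T ≤ x * y) : (1 + 1 / x) * a ≤ 1 + (y + T) / c := by
  calc (1 + 1 / x) * a ≤ (1 + 1 / x) * (1 + T / c) := by gcongr
    _ = 1 + T / c + (c + T) / x / c := by field_simp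
    _ ≤ 1 + T / c + y / c := by gcongr; rwa [div_le_iff₀' hx]
    _ = 1 + (y + T) / c := by ring

lemma prod_one_add_inv_le_one_add_sum_log {S : Finset ℕ} (hS : ∀ p ∈ S, p.Prime) :
    ∏ p ∈ S, (1 + 1 / (p : ℝ)) ≤ 1 + (∑ p ∈ S, log p) / (2 * log 2) := by
  induction S using Finset.induction_on_max with
  | empty => simp
  | insert p s hlt ih =>
    have hp : p.Prime := hS p (mem_insert_self p s)
    have hs : ∀ q ∈ s, q.Prime := fun q hq ↦ hS q (mem_insert_of_mem hq)
    have hps : p ∉ s := fun h ↦ (hlt p h).false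
    rw [prod_insert hps, sum_insert hps]
    exact one_add_inv_mul_le (by exact_mod_cast hp.pos) (by positivity) (ih hs)
      (two_mul_log_two_add_sum_log_le hp.two_le fun q hq ↦ ⟨hs q hq, hlt q hq⟩)

lemma sum_log_primeFactors_le_log (n : ℕ) : ∑ p ∈ n.primeFactors, log p ≤ log n := by
  rcases eq_or_ne n 0 with rfl | hn
  · simp
  have hpos : ∀ p ∈ n.primeFactors, (0 : ℝ) < p :=
    fun p hp ↦ by exact_mod_cast (Nat.prime_of_mem_primeFactors hp).pos
  have hrad : ∏ p ∈ n.primeFactors, p ≤ n :=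
    Nat.le_of_dvd (Nat.pos_of_ne_zero hn) (Nat.prod_primeFactors_dvd n)
  rw [← log_prod fun p hp ↦ (hpos p hp).ne']
  gcongr
  · exact prod_pos hpos
  · simpa using (Nat.cast_le (α := ℝ)).mpr hrad

theorem prod_one_add_inv_primeFactors_le_general (n : ℕ) :
    ∏ p ∈ n.primeFactors, (1 + 1 / (p : ℝ)) ≤ 1 + Real.log n / (2 * Real.log 2) :=
  (prod_one_add_inv_le_one_add_sum_log fun _ ↦ Nat.prime_of_mem_primeFactors).trans <| by
    gcongr; exact sum_log_primeFactors_le_log n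

/-- For every integer `n ≥ 1`, `∏_{p ∣ n} (1 + 1/p) ≤ 1 + log n / (2 log 2)`, the product
taken over all primes `p` dividing `n`. -/
theorem prod_one_add_inv_primeFactors_le (n : ℕ) (hn : 1 ≤ n) :
    ∏ p ∈ n.primeFactors, (1 + 1 / (p : ℝ)) ≤ 1 + Real.log n / (2 * Real.log 2) :=
  prod_one_add_inv_primeFactors_le_general n
end
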